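/- Let opportunities $1, \dots, n$ have values $v_i > 0$ and costs $c_i > 0$. For $\beta > 0$ define the won set $S(\beta) = \{ i : \beta v_i \geq c_i \}$ and the realized ROI $R(\beta) = \big(\sum_{i \in S(\beta)} v_i\big) / \big(\sum_{i \in S(\beta)} c_i\big)$ whenever $S(\beta)$ is nonempty. Then $R$ is non-increasing: for $0 < \beta \leq \beta'$ with $S(\beta)$ nonempty, $R(\beta') \leq R(\beta)$. -/

import Mathlib

/-!
Every opportunity won at coefficient `β` has efficiency `v / c ≥ 1 / β`, and raising the
coefficient to `β' ≥ β` only adds opportunities of efficiency `< 1 / β`. The added bundle thus has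
a value-to-cost ratio at most `1 / β`, hence at most the old ratio, and the mediant of the two
ratios cannot exceed the old one.
-/

open Finset

theorem add_div_add_le_div_of_le_mul {A B a b β : ℝ} (hA : 0 ≤ A) (ha : 0 ≤ a) (hB : 0 < B)
    (hBA : B ≤ β * A) (hab : β * a ≤ b) : (A + a) / (B + b) ≤ A / B := by
  have hβ : 0 < β := pos_of_mul_pos_left (hB.trans_le hBA) hA
  have hb : 0 ≤ b := (mul_nonneg hβ.le ha).trans hab
  rw [div_le_div_iff₀ (by linarith) hB]
  have cross : a * B ≤ A * b :=
    calc a * B ≤ a * (β * A) := mul_le_mul_of_nonneg_left hBA ha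
      _ = (β * a) * A := by ring
      _ ≤ b * A := mul_le_mul_of_nonneg_right hab hA
      _ = A * b := mul_comm _ _
  linarith

namespace Finset

variable {ι : Type*} {s t : Finset ι} {v c : ι → ℝ} {β : ℝ}

theorem sum_div_sum_le_of_subset (hst : s ⊆ t) (hv : ∀ i ∈ t, 0 ≤ v i)
    (hs : ∀ i ∈ s, c i ≤ β * v i) (hts : ∀ i ∈ t, i ∉ s → β * v i ≤ c i)
    (hc : 0 < ∑ i ∈ s, c i) :
    (∑ i ∈ t, v i) / (∑ i ∈ t, c i) ≤ (∑ i ∈ s, v i) / (∑ i ∈ s, c i) := by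
  classical
  rw [← sum_sdiff hst, ← sum_sdiff hst, add_comm (∑ i ∈ t \ s, v i),
    add_comm (∑ i ∈ t \ s, c i)]
  refine add_div_add_le_div_of_le_mul (β := β) (sum_nonneg fun i hi => hv i (hst hi))
    (sum_nonneg fun i hi => hv i (sdiff_subset hi)) hc ?_ ?_
  · rw [mul_sum]
    exact sum_le_sum hs
  · rw [mul_sum]
    exact sum_le_sum fun i hi => hts i (mem_sdiff.1 hi).1 (mem_sdiff.1 hi).2

theorem filter_le_mul_subset_filter_le_mul {β' : ℝ} (hv : ∀ i ∈ s, 0 ≤ v i) (hle : β ≤ β') :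
    s.filter (fun i => β * v i ≥ c i) ⊆ s.filter (fun i => β' * v i ≥ c i) := by
  intro i hi
  rw [mem_filter] at hi ⊢
  exact ⟨hi.1, hi.2.trans (mul_le_mul_of_nonneg_right hle (hv i hi.1))⟩

theorem sum_div_sum_filter_le_mul_le_of_le {β' : ℝ} (hv : ∀ i ∈ s, 0 ≤ v i) (hle : β ≤ β')
    (hc : 0 < ∑ i ∈ s.filter (fun i => β * v i ≥ c i), c i) :
    (∑ i ∈ s.filter (fun i => β' * v i ≥ c i), v i) /
        (∑ i ∈ s.filter (fun i => β' * v i ≥ c i), c i) ≤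
      (∑ i ∈ s.filter (fun i => β * v i ≥ c i), v i) /
        (∑ i ∈ s.filter (fun i => β * v i ≥ c i), c i) := by
  refine sum_div_sum_le_of_subset (filter_le_mul_subset_filter_le_mul hv hle)
    (fun i hi => hv i (filter_subset _ s hi)) (fun i hi => (mem_filter.1 hi).2)
    (fun i hi hlost => ?_) hc
  exact (not_le.1 fun h => hlost (mem_filter.2 ⟨filter_subset _ s hi, h⟩)).le

end Finset

theorem roi_monotone_general
    (n : ℕ) (v c : Fin n → ℝ)
    (hv : ∀ i, 0 < v i) (hc : ∀ i, 0 < c i)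
    (β β' : ℝ) (hle : β ≤ β')
    (hne : (Finset.univ.filter (fun i : Fin n => β * v i ≥ c i)).Nonempty) :
    (∑ i ∈ Finset.univ.filter (fun i : Fin n => β' * v i ≥ c i), v i) /
        (∑ i ∈ Finset.univ.filter (fun i : Fin n => β' * v i ≥ c i), c i) ≤
      (∑ i ∈ Finset.univ.filter (fun i : Fin n => β * v i ≥ c i), v i) /
        (∑ i ∈ Finset.univ.filter (fun i : Fin n => β * v i ≥ c i), c i) :=
  sum_div_sum_filter_le_mul_le_of_le (fun i _ => (hv i).le) hle (sum_pos (fun i _ => hc i) hne)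

/-- ROI Monotonicity: realized ROI is non-increasing in the bid coefficient. -/
theorem roi_monotone
    (n : ℕ) (v c : Fin n → ℝ)
    (hv : ∀ i, 0 < v i) (hc : ∀ i, 0 < c i)
    (β β' : ℝ) (hβ : 0 < β) (hle : β ≤ β')
    (hne : (Finset.univ.filter (fun i : Fin n => β * v i ≥ c i)).Nonempty) :
    (∑ i ∈ Finset.univ.filter (fun i : Fin n => β' * v i ≥ c i), v i) /
        (∑ i ∈ Finset.univ.filter (fun i : Fin n => β' * v i ≥ c i), c i) ≤
      (∑ i ∈ Finset.univ.filter (fun i : Fin n => β * v i ≥ c i), v i) /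
        (∑ i ∈ Finset.univ.filter (fun i : Fin n => β * v i ≥ c i), c i) :=
  roi_monotone_general n v c hv hc β β' hle hne
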